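/- Let q be a power of 2 and let α ∈ F_q have absolute trace Tr(α) = 1. Let C be the cyclic group of order q+1 of projective transformations of PG(2,q) induced by the matrices with rows (1,0,0), (0,a,αb), (0,b,a+b), where a² + ab + αb² = 1. Then for every line r of PG(2,q) distinct from ℓ : X₁ = 0 and not passing through U₁ = (1:0:0), the C-orbit of r consists of q+1 lines forming a dual conic with dual nucleus ℓ: every point of PG(2,q) not on ℓ lies on either 0 or 2 lines of this orbit, and every point of ℓ lies on exactly 1 line of this orbit. -/

import Mathlib

open Projectivization

variable {F : Type} [Field F]

/-- The line of `PG(2,q)` with coefficient vector `u`. -/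
def lineSet (u : Fin 3 → F) : Set (Projectivization F (Fin 3 → F)) :=
  {P | u 0 * P.rep 0 + u 1 * P.rep 1 + u 2 * P.rep 2 = 0}

/-- A set of points of `PG(2,q)` is a line if it is cut out by a nontrivial homogeneous
linear equation. -/
def IsLine (l : Set (Projectivization F (Fin 3 → F))) : Prop :=
  ∃ u : Fin 3 → F, u ≠ 0 ∧ l = lineSet u

/-- The set of matrices `(1,0,0; 0,a,αb; 0,b,a+b)` with `a² + ab + αb² = 1`, inducing
the projective transformations of the cyclic group `C` of order `q + 1`. -/
def Cmatrices (F : Type) [Field F] (α : F) : Set (Matrix (Fin 3) (Fin 3) F) :=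
  {M | ∃ a b : F, a ^ 2 + a * b + α * b ^ 2 = 1 ∧
    M = Matrix.of ![![1, 0, 0], ![0, a, α * b], ![0, b, a + b]]}

/-- The image of a set `r` of points of `PG(2,q)` under the projective transformation
induced by a matrix `M`. -/
def imageSet (F : Type) [Field F] (M : Matrix (Fin 3) (Fin 3) F)
    (r : Set (Projectivization F (Fin 3 → F))) : Set (Projectivization F (Fin 3 → F)) :=
  {Q | ∃ (x y : Fin 3 → F) (hx : x ≠ 0) (hy : y ≠ 0),
    Projectivization.mk F x hx ∈ r ∧ Q = Projectivization.mk F y hy ∧ y = M.mulVec x}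

/-- The point `U₁ = (1 : 0 : 0)` of `PG(2,q)`. -/
def U₁ (F : Type) [Field F] : Projectivization F (Fin 3 → F) :=
  Projectivization.mk F ![1, 0, 0] (by
    intro h
    simpa using congrFun h 0)

/-- The orbit of a line `r` under the group `C`. -/
def ClineOrbit (F : Type) [Field F] (α : F)
    (r : Set (Projectivization F (Fin 3 → F))) :
    Set (Set (Projectivization F (Fin 3 → F))) :=
  {l | ∃ M ∈ Cmatrices F α, l = imageSet F M r}

/-!
Since `Tr α = 1`, the polynomial `X² + X + α` has no root in `F`, so the norm form
`N(a, b) = a² + ab + αb²` of `F(ω)`, `ω² = ω + α`, is anisotropic, and `C` is its norm-one group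
acting on `(X₂, X₃)`. The image of `X₁ + cX₂ + dX₃ = 0` under the element `(a, b)` of `C` is
`X₁ + (ca + db)X₂ + (cαb + d(a + b))X₃ = 0`, and distinct `(a, b)` give distinct lines, so the
orbit is in bijection with the conic `N = 1`, which has `q + 1` points because it meets every line
through the origin of `F²` exactly once. A point `(x₀ : x₁ : x₂)` lies on the image line iff
`(a, b)` lies on an affine line `aA + bB = x₀` with `(A, B) ≠ 0` whenever `(x₁, x₂) ≠ 0`.
Parametrising that line by `λ`, the condition `N = 1` becomes `N(B, A)λ² + x₀λ + const = 0`: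
for `x₀ = 0` it has exactly one root since squaring is bijective, otherwise its roots come in
pairs `λ, λ + x₀ / N(B, A)`.
-/

theorem Algebra.trace_pow_card {K L : Type*} [Field K] [Fintype K] [Field L] [Finite L]
    [Algebra K L] (x : L) : Algebra.trace K L (x ^ Fintype.card K) = Algebra.trace K L x := by
  simpa [FiniteField.coe_frobeniusAlgEquivOfAlgebraic] using
    Algebra.trace_eq_of_algEquiv (FiniteField.frobeniusAlgEquivOfAlgebraic K L) x

theorem sq_add_self_add_ne_zero_of_trace_eq_one [Finite F] [Algebra (ZMod 2) F] {α : F}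
    (hα : Algebra.trace (ZMod 2) F α = 1) (s : F) : s ^ 2 + s + α ≠ 0 := by
  intro h
  have htr : Algebra.trace (ZMod 2) F (s ^ 2) = Algebra.trace (ZMod 2) F s := by
    simpa using Algebra.trace_pow_card (K := ZMod 2) s
  rw [eq_neg_of_add_eq_zero_right h, map_neg, map_add, htr, ← two_mul,
    show (2 : ZMod 2) = 0 from rfl, zero_mul, neg_zero] at hα
  exact zero_ne_one hα

def normForm (α x y : F) : F := x ^ 2 + x * y + α * y ^ 2

def unitCircle (α : F) : Set (F × F) := {p | normForm α p.1 p.2 = 1}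

def affLine (A B t : F) : Set (F × F) := {p | p.1 * A + p.2 * B = t}

section NormForm

variable {α : F}

theorem normForm_smul (k x y : F) : normForm α (k * x) (k * y) = k ^ 2 * normForm α x y := by
  unfold normForm; ring

theorem normForm_eq_zero_iff (hα : ∀ s : F, s ^ 2 + s + α ≠ 0) {x y : F} :
    normForm α x y = 0 ↔ x = 0 ∧ y = 0 := by
  refine ⟨fun h => ?_, fun ⟨hx, hy⟩ => by simp [normForm, hx, hy]⟩
  by_cases hy : y = 0
  · simpa [normForm, hy] using h
  · refine absurd ?_ (hα (x / y))
    rw [show (x / y) ^ 2 + x / y + α = normForm α x y / y ^ 2 by unfold normForm; field_simp, h,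
      zero_div]

end NormForm

section CharTwo

variable [CharP F 2] {α : F}

theorem ncard_setOf_sq_eq [PerfectRing F 2] (e : F) : {x : F | x ^ 2 = e}.ncard = 1 := by
  obtain ⟨x, hx, huniq⟩ := (bijective_frobenius F 2).existsUnique e
  exact Set.ncard_eq_one.mpr ⟨x, Set.eq_singleton_iff_unique_mem.mpr ⟨hx, fun y hy => huniq y hy⟩⟩

theorem normForm_add_self (a b : F) : normForm α (a + b) b = normForm α a b := by
  unfold normForm
  linear_combination (norm := (ring_nf; reduce_mod_char!))

theorem normForm_add_mul (a b A B l : F) :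
    normForm α (a + l * B) (b + l * A) =
      normForm α a b + l * (a * A + b * B) + l ^ 2 * normForm α B A := by
  unfold normForm
  linear_combination (norm := (ring_nf; reduce_mod_char!))

theorem affLine_eq_range {A B t : F} (hAB : (A, B) ≠ 0) {p₀ : F × F}
    (hp₀ : p₀ ∈ affLine A B t) :
    affLine A B t = Set.range fun l : F => (p₀.1 + l * B, p₀.2 + l * A) := by
  ext ⟨a, b⟩
  simp only [affLine, Set.mem_ofPred_eq, Set.mem_range, Prod.mk.injEq] at hp₀ ⊢
  constructor
  · intro h
    have hd : (a - p₀.1) * A + (b - p₀.2) * B = 0 := by linear_combination h - hp₀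
    by_cases hA : A = 0
    · have hB : B ≠ 0 := fun hB => hAB (by simp [hA, hB])
      refine ⟨(a - p₀.1) / B, by field_simp; ring, ?_⟩
      have : b - p₀.2 = 0 := by simpa [hA, hB] using hd
      simp only [hA, mul_zero, add_zero]
      linear_combination -this
    · refine ⟨(b - p₀.2) / A, ?_, by field_simp; ring⟩
      field_simp
      linear_combination (norm := (ring_nf; reduce_mod_char!)) hd
  · rintro ⟨l, rfl, rfl⟩
    linear_combination (norm := (ring_nf; reduce_mod_char!)) hp₀

theorem ncard_unitCircle_inter_affLine {A B t : F} (hAB : (A, B) ≠ 0) {p₀ : F × F}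
    (hp₀ : p₀ ∈ affLine A B t) :
    (unitCircle α ∩ affLine A B t).ncard =
      {l : F | normForm α p₀.1 p₀.2 + l * t + l ^ 2 * normForm α B A = 1}.ncard := by
  have hinj : Function.Injective fun l : F => (p₀.1 + l * B, p₀.2 + l * A) := by
    intro l l' h
    simp only [Prod.mk.injEq, add_right_inj] at h
    by_cases hA : A = 0
    · exact mul_right_cancel₀ (fun hB => hAB (by simp [hA, hB])) h.1
    · exact mul_right_cancel₀ hA h.2
  rw [affLine_eq_range hAB hp₀, ← Set.image_preimage_eq_inter_range,
    Set.ncard_image_of_injective _ hinj]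
  congr 1
  ext l
  simp only [Set.mem_preimage, unitCircle, Set.mem_ofPred_eq, normForm_add_mul]
  rw [hp₀]

theorem ncard_unitCircle_inter_affLine_zero [PerfectRing F 2] (hα : ∀ s : F, s ^ 2 + s + α ≠ 0)
    {A B : F} (hAB : (A, B) ≠ 0) : (unitCircle α ∩ affLine A B 0).ncard = 1 := by
  have hD : normForm α B A ≠ 0 := mt (normForm_eq_zero_iff hα).1 (by simpa [and_comm] using hAB)
  rw [ncard_unitCircle_inter_affLine hAB (p₀ := 0) (by simp [affLine])]
  convert ncard_setOf_sq_eq (normForm α B A)⁻¹ using 2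
  ext l
  rw [Set.mem_ofPred_eq, Set.mem_ofPred_eq, ← mul_eq_one_iff_eq_inv₀ hD]
  simp [normForm]

theorem ncard_unitCircle_inter_affLine_of_ne_zero (hα : ∀ s : F, s ^ 2 + s + α ≠ 0) {A B t : F}
    (ht : t ≠ 0) :
    (unitCircle α ∩ affLine A B t).ncard = 0 ∨ (unitCircle α ∩ affLine A B t).ncard = 2 := by
  rcases (unitCircle α ∩ affLine A B t).eq_empty_or_nonempty with h | ⟨p₀, hp₀N, hp₀⟩
  · exact Or.inl (by rw [h, Set.ncard_empty])
  have hAB : (A, B) ≠ 0 := by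
    intro h
    simp only [Prod.mk_eq_zero] at h
    exact ht (by simpa [affLine, h] using hp₀.symm)
  have hD : normForm α B A ≠ 0 := mt (normForm_eq_zero_iff hα).1 (by simpa [and_comm] using hAB)
  have hroots : {l : F | normForm α p₀.1 p₀.2 + l * t + l ^ 2 * normForm α B A = 1} =
      {0, -t / normForm α B A} := by
    ext l
    have hquad : normForm α p₀.1 p₀.2 + l * t + l ^ 2 * normForm α B A = 1 ↔
        l * (l * normForm α B A + t) = 0 := by
      rw [show normForm α p₀.1 p₀.2 = 1 from hp₀N]
      constructor <;> intro h <;> linear_combination h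
    rw [Set.mem_ofPred_eq, hquad, mul_eq_zero, add_eq_zero_iff_eq_neg, ← eq_div_iff hD]
    rfl
  right
  rw [ncard_unitCircle_inter_affLine hAB hp₀, hroots,
    Set.ncard_pair (div_ne_zero (neg_ne_zero.2 ht) hD).symm]

theorem ncard_unitCircle [Finite F] (hα : ∀ s : F, s ^ 2 + s + α ≠ 0) :
    (unitCircle α).ncard = Nat.card F + 1 := by
  have hne : ∀ p ∈ unitCircle α, p ≠ 0 := by
    rintro p hp rfl
    simp [unitCircle, normForm] at hp
  -- each line through the origin meets the conic once: `N(k • v) = k² N(v)`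
  let f : unitCircle α → Projectivization F (F × F) := fun p => mk F p.1 (hne p.1 p.2)
  have hf : Function.Bijective f := by
    constructor
    · rintro ⟨⟨a, b⟩, hp⟩ ⟨⟨a', b'⟩, hp'⟩ h
      obtain ⟨k, hk⟩ := (mk_eq_mk_iff' F _ _ _ _).1 h
      simp only [Prod.smul_mk, smul_eq_mul, Prod.mk.injEq] at hk
      obtain ⟨rfl, rfl⟩ := hk
      have hk2 : k ^ 2 = 1 := by
        simpa [unitCircle, normForm_smul, show normForm α a' b' = 1 from hp'] using hp
      have hk1 : k = 1 := frobenius_inj F 2 (by rw [frobenius_def, frobenius_def, hk2, one_pow])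
      simp [hk1]
    · refine Projectivization.ind fun v hv => ?_
      obtain ⟨k, hk⟩ := (bijective_frobenius F 2).2 (normForm α v.1 v.2)⁻¹
      have hN : normForm α v.1 v.2 ≠ 0 :=
        mt (normForm_eq_zero_iff hα).1 fun h => hv (Prod.ext h.1 h.2)
      refine ⟨⟨k • v, ?_⟩, (mk_eq_mk_iff' F _ _ _ _).2 ⟨k, rfl⟩⟩
      simp only [unitCircle, Set.mem_ofPred_eq, Prod.smul_fst, Prod.smul_snd, smul_eq_mul,
        normForm_smul]
      rw [← frobenius_def, hk, inv_mul_cancel₀ hN]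
  rw [← Nat.card_coe_set_eq, Nat.card_eq_of_bijective f hf,
    Projectivization.card_of_finrank_two]
  simp

end CharTwo

section Lines

open Matrix

theorem mem_lineSet_iff {u : Fin 3 → F} {P : Projectivization F (Fin 3 → F)} :
    P ∈ lineSet u ↔ u ⬝ᵥ P.rep = 0 := by
  simp [lineSet, dotProduct, Fin.sum_univ_three]

theorem mk_mem_lineSet_iff {u x : Fin 3 → F} (hx : x ≠ 0) :
    mk F x hx ∈ lineSet u ↔ u ⬝ᵥ x = 0 := by
  obtain ⟨k, hk⟩ := exists_smul_eq_mk_rep F x hx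
  rw [mem_lineSet_iff, ← hk, dotProduct_smul, smul_eq_zero_iff_eq]

theorem lineSet_smul {k : F} (hk : k ≠ 0) (u : Fin 3 → F) : lineSet (k • u) = lineSet u := by
  ext P
  simp only [mem_lineSet_iff, smul_dotProduct, smul_eq_zero, hk, false_or]

theorem eq_and_eq_of_lineSet_eq {c d c' d' : F}
    (h : lineSet ![1, c, d] = lineSet ![1, c', d']) : c = c' ∧ d = d' := by
  have key : ∀ x : Fin 3 → F, x ≠ 0 → ![1, c, d] ⬝ᵥ x = 0 → ![1, c', d'] ⬝ᵥ x = 0 :=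
    fun x hx => by rw [← mk_mem_lineSet_iff hx, ← mk_mem_lineSet_iff hx, h]; exact id
  have hc := key ![-c, 1, 0] (fun h => by simpa using congrFun h 1)
    (by simp [dotProduct, Fin.sum_univ_three])
  have hd := key ![-d, 0, 1] (fun h => by simpa using congrFun h 2)
    (by simp [dotProduct, Fin.sum_univ_three])
  simp only [dotProduct, Fin.sum_univ_three, cons_val_zero, cons_val_one, cons_val, mul_neg,
    one_mul, mul_one, mul_zero, add_zero] at hc hd
  constructor
  · linear_combination -hc
  · linear_combination -hd

theorem imageSet_lineSet {M N : Matrix (Fin 3) (Fin 3) F} (hMN : M * N = 1) (hNM : N * M = 1)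
    (u : Fin 3 → F) : imageSet F M (lineSet u) = lineSet (u ᵥ* N) := by
  ext Q
  constructor
  · rintro ⟨x, y, hx, hy, hxu, rfl, rfl⟩
    rw [mk_mem_lineSet_iff] at hxu ⊢
    rwa [← dotProduct_mulVec, mulVec_mulVec, hNM, one_mulVec]
  · intro hQ
    have hQx : M *ᵥ (N *ᵥ Q.rep) = Q.rep := by rw [mulVec_mulVec, hMN, one_mulVec]
    have hx : N *ᵥ Q.rep ≠ 0 := fun h => Q.rep_nonzero (by rw [← hQx, h, mulVec_zero])
    refine ⟨_, _, hx, Q.rep_nonzero, ?_, (mk_rep Q).symm, hQx.symm⟩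
    rwa [mk_mem_lineSet_iff, dotProduct_mulVec, ← mem_lineSet_iff]

theorem exists_lineSet_eq_lineSet_vecCons_one {u : Fin 3 → F} (hU : U₁ F ∉ lineSet u)
    (hl : lineSet u ≠ {P | P.rep 0 = 0}) :
    ∃ c d : F, (c, d) ≠ 0 ∧ lineSet u = lineSet ![1, c, d] := by
  have hu0 : u 0 ≠ 0 := fun h => hU (by
    rw [U₁, mk_mem_lineSet_iff]
    simp [dotProduct, Fin.sum_univ_three, h])
  have hu : u = u 0 • ![1, u 1 / u 0, u 2 / u 0] := by
    ext i
    fin_cases i <;> simp [mul_div_cancel₀, hu0]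
  refine ⟨u 1 / u 0, u 2 / u 0, fun h => hl ?_, by conv_lhs => rw [hu, lineSet_smul hu0]⟩
  simp only [Prod.mk_eq_zero, div_eq_zero_iff, hu0, or_false] at h
  ext P
  simp [lineSet, h.1, h.2, hu0]

end Lines

/-- The lower-right block is multiplication by `a + bω` on `F(ω) = F ⊕ Fω`, `ω² = ω + α`. -/
def Cmat (α a b : F) : Matrix (Fin 3) (Fin 3) F :=
  Matrix.of ![![1, 0, 0], ![0, a, α * b], ![0, b, a + b]]

section OrbitOfLine

open Matrix

variable {α : F}

theorem Cmat_mul_Cmat (a b a' b' : F) :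
    Cmat α a b * Cmat α a' b' = Cmat α (a * a' + α * b * b') (a * b' + b * a' + b * b') := by
  unfold Cmat
  rw [mul_fin_three]
  congr! 3 <;> ring_nf

theorem Cmat_one_zero : Cmat α 1 0 = 1 := by
  ext i j
  fin_cases i <;> fin_cases j <;> simp [Cmat]

theorem vecMul_Cmat (a b c d : F) :
    ![1, c, d] ᵥ* Cmat α a b = ![1, c * a + d * b, c * α * b + d * (a + b)] := by
  ext i
  fin_cases i <;> simp only [Cmat, vecMul, dotProduct, Fin.sum_univ_three, of_apply, cons_val',
    cons_val_fin_one, cons_val_zero, cons_val_one, cons_val, Fin.isValue, Fin.mk_one, Fin.zero_eta,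
    Fin.reduceFinMk] <;> ring

theorem mem_lineSet_vecMul_Cmat_iff (a b c d : F) (P : Projectivization F (Fin 3 → F)) :
    P ∈ lineSet (![1, c, d] ᵥ* Cmat α a b) ↔
      (a, b) ∈ affLine (c * P.rep 1 + d * P.rep 2) (d * P.rep 1 + (c * α + d) * P.rep 2)
        (-P.rep 0) := by
  rw [mem_lineSet_iff, vecMul_Cmat]
  simp only [dotProduct, Fin.sum_univ_three, cons_val_zero, one_mul, cons_val_one, cons_val,
    affLine, Set.mem_ofPred_eq]
  constructor <;> intro h <;> linear_combination h

variable [CharP F 2]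

theorem Cmat_mul_Cmat_add_self {a b : F} (h : normForm α a b = 1) :
    Cmat α a b * Cmat α (a + b) b = 1 := by
  rw [Cmat_mul_Cmat, ← Cmat_one_zero]
  unfold normForm at h
  congr 1
  · linear_combination h
  · linear_combination (norm := (ring_nf; reduce_mod_char!))

theorem Cmat_add_self_mul_Cmat {a b : F} (h : normForm α a b = 1) :
    Cmat α (a + b) b * Cmat α a b = 1 := by
  rw [Cmat_mul_Cmat, ← Cmat_one_zero]
  unfold normForm at h
  congr 1
  · linear_combination h
  · linear_combination (norm := (ring_nf; reduce_mod_char!))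

theorem ClineOrbit_lineSet (u : Fin 3 → F) :
    ClineOrbit F α (lineSet u) =
      (fun p : F × F => lineSet (u ᵥ* Cmat α p.1 p.2)) '' unitCircle α := by
  ext l
  constructor
  · rintro ⟨_, ⟨a, b, hN, rfl⟩, rfl⟩
    exact ⟨(a + b, b), (normForm_add_self a b).trans hN,
      (imageSet_lineSet (Cmat_mul_Cmat_add_self hN) (Cmat_add_self_mul_Cmat hN) u).symm⟩
  · rintro ⟨⟨a, b⟩, hN, rfl⟩
    have hN' : normForm α (a + b) b = 1 := (normForm_add_self a b).trans hN
    refine ⟨Cmat α (a + b) b, ⟨a + b, b, hN', rfl⟩, ?_⟩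
    rw [imageSet_lineSet (Cmat_mul_Cmat_add_self hN') (Cmat_add_self_mul_Cmat hN') u,
      add_assoc, CharTwo.add_self_eq_zero, add_zero]

theorem eq_zero_of_linear_system {c d x y : F} (hD : normForm α d c ≠ 0)
    (h₁ : c * x + d * y = 0) (h₂ : d * x + (c * α + d) * y = 0) : x = 0 ∧ y = 0 := by
  unfold normForm at hD
  have hx : (d ^ 2 + d * c + α * c ^ 2) * x = 0 := by
    linear_combination (norm := (ring_nf; reduce_mod_char!)) (c * α + d) * h₁ + d * h₂
  have hy : (d ^ 2 + d * c + α * c ^ 2) * y = 0 := by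
    linear_combination (norm := (ring_nf; reduce_mod_char!)) d * h₁ + c * h₂
  exact ⟨(mul_eq_zero.1 hx).resolve_left hD, (mul_eq_zero.1 hy).resolve_left hD⟩

theorem injective_lineSet_vecMul_Cmat {c d : F} (hD : normForm α d c ≠ 0) :
    Function.Injective fun p : F × F => lineSet (![1, c, d] ᵥ* Cmat α p.1 p.2) := by
  rintro ⟨a, b⟩ ⟨a', b'⟩ h
  simp only [vecMul_Cmat] at h
  obtain ⟨h₁, h₂⟩ := eq_and_eq_of_lineSet_eq h
  obtain ⟨ha, hb⟩ := eq_zero_of_linear_system hD (x := a - a') (y := b - b')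
    (by linear_combination h₁) (by linear_combination h₂)
  rw [sub_eq_zero.1 ha, sub_eq_zero.1 hb]

theorem ncard_lineSet_vecMul_Cmat_mem {c d : F} (hD : normForm α d c ≠ 0)
    (P : Projectivization F (Fin 3 → F)) :
    {l ∈ (fun p : F × F => lineSet (![1, c, d] ᵥ* Cmat α p.1 p.2)) '' unitCircle α |
        P ∈ l}.ncard =
      (unitCircle α ∩ affLine (c * P.rep 1 + d * P.rep 2) (d * P.rep 1 + (c * α + d) * P.rep 2)
        (-P.rep 0)).ncard := by
  rw [← Set.inter_ofPred_eq_sep, ← Set.image_inter_preimage,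
    Set.ncard_image_of_injective _ (injective_lineSet_vecMul_Cmat hD)]
  congr 2
  ext p
  exact mem_lineSet_vecMul_Cmat_iff p.1 p.2 c d P

end OrbitOfLine

theorem C_line_orbit_dual_conic_general
    (q : ℕ)
    (F : Type) [Field F] [Fintype F] [Algebra (ZMod 2) F] (hF : Fintype.card F = q)
    (α : F) (hα : Algebra.trace (ZMod 2) F α = 1)
    (r : Set (Projectivization F (Fin 3 → F))) (hr : IsLine r)
    (hrl : r ≠ {P : Projectivization F (Fin 3 → F) | P.rep 0 = 0})
    (hU₁ : U₁ F ∉ r) :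
    (∀ l ∈ ClineOrbit F α r, IsLine l) ∧
    (ClineOrbit F α r).ncard = q + 1 ∧
    (∀ P : Projectivization F (Fin 3 → F), P.rep 0 ≠ 0 →
      {l ∈ ClineOrbit F α r | P ∈ l}.ncard = 0 ∨
      {l ∈ ClineOrbit F α r | P ∈ l}.ncard = 2) ∧
    (∀ P : Projectivization F (Fin 3 → F), P.rep 0 = 0 →
      {l ∈ ClineOrbit F α r | P ∈ l}.ncard = 1) := by
  have : CharP F 2 := charP_of_injective_algebraMap (algebraMap (ZMod 2) F).injective 2
  have hα' := sq_add_self_add_ne_zero_of_trace_eq_one hα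
  obtain ⟨u, -, rfl⟩ := hr
  obtain ⟨c, d, hcd, hu⟩ := exists_lineSet_eq_lineSet_vecCons_one hU₁ hrl
  have hD : normForm α d c ≠ 0 := mt (normForm_eq_zero_iff hα').1 (by simpa [and_comm] using hcd)
  rw [hu, ClineOrbit_lineSet]
  refine ⟨?_, ?_, fun P hP => ?_, fun P hP => ?_⟩
  · rintro _ ⟨⟨a, b⟩, -, rfl⟩
    exact ⟨_, fun h => by simpa [vecMul_Cmat] using congrFun h 0, rfl⟩
  · rw [Set.ncard_image_of_injective _ (injective_lineSet_vecMul_Cmat hD), ncard_unitCircle hα',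
      Nat.card_eq_fintype_card, hF]
  · rw [ncard_lineSet_vecMul_Cmat_mem hD]
    exact ncard_unitCircle_inter_affLine_of_ne_zero hα' (neg_ne_zero.2 hP)
  · rw [ncard_lineSet_vecMul_Cmat_mem hD, hP, neg_zero]
    refine ncard_unitCircle_inter_affLine_zero hα' fun h => P.rep_nonzero ?_
    obtain ⟨h₁, h₂⟩ := eq_zero_of_linear_system hD (Prod.mk_eq_zero.1 h).1 (Prod.mk_eq_zero.1 h).2
    ext i
    fin_cases i <;> assumption

/-- Let `q = 2ⁿ` and let `α ∈ F_q` have absolute trace `1`. For every line `r` of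
`PG(2,q)` distinct from `ℓ : X₁ = 0` and not through `U₁ = (1:0:0)`, the `C`-orbit of
`r` consists of `q + 1` lines forming a dual conic with dual nucleus `ℓ`: every point
off `ℓ` lies on `0` or `2` lines of the orbit, and every point of `ℓ` lies on exactly
`1` line of the orbit. -/
theorem C_line_orbit_dual_conic
    (n q : ℕ) (hn : 0 < n) (hq : q = 2 ^ n)
    (F : Type) [Field F] [Fintype F] [Algebra (ZMod 2) F] (hF : Fintype.card F = q)
    (α : F) (hα : Algebra.trace (ZMod 2) F α = 1)
    (r : Set (Projectivization F (Fin 3 → F))) (hr : IsLine r)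
    (hrl : r ≠ {P : Projectivization F (Fin 3 → F) | P.rep 0 = 0})
    (hU₁ : U₁ F ∉ r) :
    (∀ l ∈ ClineOrbit F α r, IsLine l) ∧
    (ClineOrbit F α r).ncard = q + 1 ∧
    (∀ P : Projectivization F (Fin 3 → F), P.rep 0 ≠ 0 →
      {l ∈ ClineOrbit F α r | P ∈ l}.ncard = 0 ∨
      {l ∈ ClineOrbit F α r | P ∈ l}.ncard = 2) ∧
    (∀ P : Projectivization F (Fin 3 → F), P.rep 0 = 0 →
      {l ∈ ClineOrbit F α r | P ∈ l}.ncard = 1) :=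
  C_line_orbit_dual_conic_general q F hF α hα r hr hrl hU₁
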